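/- Let γ ∈ (0,1], β ∈ (0,1), and set α := βγ. Let T > 0, C ≥ 0, and let B : [0,T] → ℝ^m be γ-Hölder continuous with ‖B‖_γ ≤ C. For k ∈ ℕ let B^k be the dyadic piecewise linear interpolation of B with mesh T/2^k. Then there exists a constant C_β, depending only on β, γ and C, such that for all 0 ≤ s < t ≤ T and all k ∈ ℕ, |(B^k_t − B_t) − (B^k_s − B_s)| ≤ C_β (t − s)^α (|B^k_t − B_t| + |B^k_s − B_s|)^{1−β}. -/

import Mathlib

/-!
On each dyadic cell of length `ε` the interpolation `B^k` is affine with slope of norm at most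
`C ε^γ / ε`, so on a cell it is `C`-Hölder of order `γ`; splitting at the nodes between `s` and `t`
makes `B^k` globally `3C`-Hölder, hence the error `B^k - B` is `4C`-Hölder. The claim is then
the interpolation `a = a^β a^{1-β}` between `a ≤ 4C (t-s)^γ` and the triangle inequality
`a ≤ |B^k_t - B_t| + |B^k_s - B_s|`.
-/

open Set

/-- The dyadic piecewise linear interpolation of `B : [0,T] → ℝ^m` with mesh
`T / 2^k`: on each interval `[t_{ℓ-1}, t_ℓ]` with `t_ℓ = ℓ T / 2^k`,
`B^k_t = B(t_{ℓ-1}) + (t - t_{ℓ-1}) (2^k / T) (B(t_ℓ) - B(t_{ℓ-1}))`. -/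
noncomputable def dyadicInterp {m : ℕ} (T : ℝ) (k : ℕ) (B : ℝ → (Fin m → ℝ)) (t : ℝ) :
    Fin m → ℝ :=
  let ε : ℝ := T / 2 ^ k
  let l : ℕ := ⌊t / ε⌋₊
  B (l * ε) + ((t - l * ε) / ε) • (B ((l + 1) * ε) - B (l * ε))

lemma div_mul_rpow_le_rpow {u ε γ : ℝ} (hu : 0 ≤ u) (huε : u ≤ ε) (hγ : γ ≤ 1) :
    u / ε * ε ^ γ ≤ u ^ γ := by
  rcases hu.eq_or_lt with rfl | hu
  · simp [Real.rpow_nonneg le_rfl]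
  have hε : 0 < ε := hu.trans_le huε
  calc u / ε * ε ^ γ ≤ (u / ε) ^ γ * ε ^ γ := by
        gcongr
        exact Real.self_le_rpow_of_le_one (by positivity) ((div_le_one hε).2 huε) hγ
    _ = u ^ γ := by rw [← Real.mul_rpow (by positivity) hε.le, div_mul_cancel₀ u hε.ne']

lemma le_rpow_mul_rpow_of_le_of_le {a x y β : ℝ} (ha : 0 ≤ a) (hax : a ≤ x) (hay : a ≤ y)
    (hβ0 : 0 ≤ β) (hβ1 : β ≤ 1) : a ≤ x ^ β * y ^ (1 - β) := by
  calc a = a ^ β * a ^ (1 - β) := by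
        rw [← Real.rpow_add' ha (by norm_num), add_sub_cancel, Real.rpow_one]
    _ ≤ x ^ β * y ^ (1 - β) :=
        mul_le_mul (Real.rpow_le_rpow ha hax hβ0) (Real.rpow_le_rpow ha hay (by linarith))
          (by positivity) (Real.rpow_nonneg (ha.trans hax) β)

section Segment

variable {E : Type*} [NormedAddCommGroup E] [NormedSpace ℝ E] {T C γ : ℝ} {k n : ℕ} {B : ℝ → E}

noncomputable def dyadicSegment (T : ℝ) (k n : ℕ) (B : ℝ → E) (u : ℝ) : E :=
  AffineMap.lineMap (B (n * (T / 2 ^ k))) (B ((n + 1) * (T / 2 ^ k)))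
    ((u - n * (T / 2 ^ k)) / (T / 2 ^ k))

lemma dyadicSegment_left : dyadicSegment T k n B (n * (T / 2 ^ k)) = B (n * (T / 2 ^ k)) := by
  simp [dyadicSegment]

lemma dyadicSegment_right (hT : T ≠ 0) :
    dyadicSegment T k n B ((n + 1) * (T / 2 ^ k)) = B ((n + 1) * (T / 2 ^ k)) := by
  have hone : ((n + 1) * (T / 2 ^ k) - n * (T / 2 ^ k)) / (T / 2 ^ k) = 1 := by
    field_simp
    ring
  simp [dyadicSegment, hone]

lemma dist_dyadicSegment_le (hT : 0 < T) (hC : 0 ≤ C) (hγ : γ ≤ 1)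
    (hB : ∀ s t : ℝ, 0 ≤ s → s ≤ t → t ≤ T → ‖B t - B s‖ ≤ C * (t - s) ^ γ)
    (hn : n < 2 ^ k) {u v : ℝ} (hv : n * (T / 2 ^ k) ≤ v) (hvu : v ≤ u)
    (hu : u ≤ (n + 1) * (T / 2 ^ k)) :
    dist (dyadicSegment T k n B u) (dyadicSegment T k n B v) ≤ C * (u - v) ^ γ := by
  set ε := T / 2 ^ k with hε_def
  have hε : 0 < ε := by positivity
  have hcell : (n + 1) * ε ≤ T := by
    calc (n + 1) * ε ≤ 2 ^ k * ε := by gcongr; exact_mod_cast hn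
      _ = T := by rw [hε_def]; field_simp
  have hstep : dist (B (n * ε)) (B ((n + 1) * ε)) ≤ C * ε ^ γ := by
    rw [dist_comm, dist_eq_norm]
    simpa [add_one_mul] using hB (n * ε) ((n + 1) * ε) (by positivity) (by linarith) hcell
  rw [dyadicSegment, dyadicSegment, dist_lineMap_lineMap, Real.dist_eq, ← sub_div,
    sub_sub_sub_cancel_right, abs_div, abs_of_pos hε, abs_of_nonneg (sub_nonneg.2 hvu)]
  calc (u - v) / ε * dist (B (n * ε)) (B ((n + 1) * ε)) ≤ (u - v) / ε * (C * ε ^ γ) := by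
        gcongr
    _ = C * ((u - v) / ε * ε ^ γ) := by ring
    _ ≤ C * (u - v) ^ γ := by
        gcongr
        exact div_mul_rpow_le_rpow (by linarith) (by linarith) hγ

end Segment

section Interp

variable {m : ℕ} {T C γ : ℝ} {B : ℝ → (Fin m → ℝ)}

/-- Closed cells with `n < 2^k`: at `t = T` the floor index is `2^k`, whose cell leaves `[0,T]`. -/
lemma exists_dyadic_cell (hT : 0 < T) (k : ℕ) {t : ℝ} (ht : 0 ≤ t) (htT : t ≤ T) :
    ∃ n : ℕ, n < 2 ^ k ∧ n * (T / 2 ^ k) ≤ t ∧ t ≤ (n + 1) * (T / 2 ^ k) := by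
  have hε : 0 < T / 2 ^ k := by positivity
  rcases htT.lt_or_eq with htT | rfl
  · refine ⟨⌊t / (T / 2 ^ k)⌋₊, ?_, ?_, ?_⟩
    · have hmesh : (2 : ℝ) ^ k * (T / 2 ^ k) = T := by field_simp
      refine (Nat.floor_lt (by positivity)).2 ?_
      push_cast
      rwa [div_lt_iff₀ hε, hmesh]
    · exact (le_div_iff₀ hε).1 (Nat.floor_le (by positivity))
    · exact ((div_lt_iff₀ hε).1 (Nat.lt_floor_add_one _)).le
  · refine ⟨2 ^ k - 1, Nat.sub_one_lt (by positivity), ?_, ?_⟩ <;>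
      rw [Nat.cast_pred (by positivity)] <;> push_cast <;> field_simp <;> linarith

lemma dyadicInterp_eq_dyadicSegment (hT : 0 < T) (B : ℝ → (Fin m → ℝ)) {k n : ℕ} {t : ℝ}
    (ht : n * (T / 2 ^ k) ≤ t) (htn : t ≤ (n + 1) * (T / 2 ^ k)) :
    dyadicInterp T k B t = dyadicSegment T k n B t := by
  have hε : 0 < T / 2 ^ k := by positivity
  rcases htn.lt_or_eq with htn | rfl
  · have hfloor : ⌊t / (T / 2 ^ k)⌋₊ = n :=
      (Nat.floor_eq_iff (div_nonneg ((by positivity : (0 : ℝ) ≤ n * _).trans ht) hε.le)).2 ⟨(le_div_iff₀ hε).2 ht, (div_lt_iff₀ hε).2 htn⟩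
    simp only [dyadicInterp, dyadicSegment, hfloor, AffineMap.lineMap_apply_module', add_comm]
  · have hfloor : ⌊(n + 1) * (T / 2 ^ k) / (T / 2 ^ k)⌋₊ = n + 1 := by
      rw [mul_div_cancel_right₀ _ hε.ne']
      exact_mod_cast Nat.floor_natCast (n + 1)
    simp [dyadicInterp, hfloor, dyadicSegment_right hT.ne']

lemma dist_dyadicInterp_le (hT : 0 < T) (hC : 0 ≤ C) (hγ0 : 0 ≤ γ) (hγ1 : γ ≤ 1)
    (hB : ∀ s t : ℝ, 0 ≤ s → s ≤ t → t ≤ T → ‖B t - B s‖ ≤ C * (t - s) ^ γ)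
    (k : ℕ) {s t : ℝ} (hs : 0 ≤ s) (hst : s ≤ t) (htT : t ≤ T) :
    dist (dyadicInterp T k B t) (dyadicInterp T k B s) ≤ 3 * C * (t - s) ^ γ := by
  rcases hst.eq_or_lt with rfl | hst
  · simp only [dist_self, sub_self]
    positivity
  obtain ⟨i, hi, hsi, hsi'⟩ := exists_dyadic_cell hT k hs (hst.le.trans htT)
  obtain ⟨j, hj, htj, htj'⟩ := exists_dyadic_cell hT k (hs.trans hst.le) htT
  set ε := T / 2 ^ k
  rw [dyadicInterp_eq_dyadicSegment hT B hsi hsi', dyadicInterp_eq_dyadicSegment hT B htj htj']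
  have hCpos : 0 ≤ C * (t - s) ^ γ := by positivity
  have hmono : ∀ x, 0 ≤ x → x ≤ t - s → C * x ^ γ ≤ C * (t - s) ^ γ :=
    fun x hx hxts => by gcongr
  rcases lt_trichotomy i j with hij | rfl | hji
  · have hij : (i + 1) * ε ≤ j * ε := by gcongr; exact_mod_cast hij
    calc dist (dyadicSegment T k j B t) (dyadicSegment T k i B s)
        ≤ dist (dyadicSegment T k j B t) (dyadicSegment T k j B (j * ε))
          + dist (dyadicSegment T k j B (j * ε)) (dyadicSegment T k i B ((i + 1) * ε))
          + dist (dyadicSegment T k i B ((i + 1) * ε)) (dyadicSegment T k i B s) :=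
          dist_triangle4 _ _ _ _
      _ ≤ C * (t - j * ε) ^ γ + C * (j * ε - (i + 1) * ε) ^ γ + C * ((i + 1) * ε - s) ^ γ := by
          gcongr
          · exact dist_dyadicSegment_le hT hC hγ1 hB hj le_rfl htj htj'
          · rw [dyadicSegment_left, dyadicSegment_right hT.ne', dist_eq_norm]
            exact hB _ _ (by positivity) hij (htj.trans htT)
          · exact dist_dyadicSegment_le hT hC hγ1 hB hi hsi hsi' le_rfl
      _ ≤ C * (t - s) ^ γ + C * (t - s) ^ γ + C * (t - s) ^ γ := by
          refine add_le_add (add_le_add (hmono _ ?_ ?_) (hmono _ ?_ ?_)) (hmono _ ?_ ?_) <;>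
            linarith
      _ = 3 * C * (t - s) ^ γ := by ring
  · linarith [dist_dyadicSegment_le hT hC hγ1 hB hi hsi hst.le htj']
  · have : (j + 1) * ε ≤ i * ε := by gcongr; exact_mod_cast hji
    linarith

lemma norm_dyadicInterp_sub_sub_le (hT : 0 < T) (hC : 0 ≤ C) (hγ0 : 0 ≤ γ) (hγ1 : γ ≤ 1)
    (hB : ∀ s t : ℝ, 0 ≤ s → s ≤ t → t ≤ T → ‖B t - B s‖ ≤ C * (t - s) ^ γ)
    (k : ℕ) {s t : ℝ} (hs : 0 ≤ s) (hst : s ≤ t) (htT : t ≤ T) :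
    ‖(dyadicInterp T k B t - B t) - (dyadicInterp T k B s - B s)‖ ≤ 4 * C * (t - s) ^ γ := by
  calc ‖(dyadicInterp T k B t - B t) - (dyadicInterp T k B s - B s)‖
      = ‖(dyadicInterp T k B t - dyadicInterp T k B s) - (B t - B s)‖ := by congr 1; abel
    _ ≤ ‖dyadicInterp T k B t - dyadicInterp T k B s‖ + ‖B t - B s‖ := norm_sub_le _ _
    _ ≤ 3 * C * (t - s) ^ γ + C * (t - s) ^ γ := by
        gcongr
        · rw [← dist_eq_norm]
          exact dist_dyadicInterp_le hT hC hγ0 hγ1 hB k hs hst htT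
        · exact hB s t hs hst htT
    _ = 4 * C * (t - s) ^ γ := by ring

end Interp

theorem dyadic_interp_error_interpolation
    (γ β : ℝ) (hγ0 : 0 < γ) (hγ1 : γ ≤ 1) (hβ0 : 0 < β) (hβ1 : β < 1)
    (C : ℝ) (hC : 0 ≤ C) :
    ∃ Cβ : ℝ, 0 < Cβ ∧
      ∀ (m : ℕ) (T : ℝ), 0 < T →
      ∀ B : ℝ → (Fin m → ℝ),
        (∀ s t : ℝ, 0 ≤ s → s ≤ t → t ≤ T → ‖B t - B s‖ ≤ C * (t - s) ^ γ) →
        ∀ (k : ℕ) (s t : ℝ), 0 ≤ s → s < t → t ≤ T →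
          ‖(dyadicInterp T k B t - B t) - (dyadicInterp T k B s - B s)‖
            ≤ Cβ * (t - s) ^ (β * γ) *
              (‖dyadicInterp T k B t - B t‖ + ‖dyadicInterp T k B s - B s‖) ^ (1 - β) := by
  refine ⟨(4 * C + 1) ^ β, by positivity, fun m T hT B hB k s t hs hst htT => ?_⟩
  have hts : 0 ≤ t - s := by linarith
  have hholder : ‖(dyadicInterp T k B t - B t) - (dyadicInterp T k B s - B s)‖
      ≤ (4 * C + 1) * (t - s) ^ γ :=
    (norm_dyadicInterp_sub_sub_le hT hC hγ0.le hγ1 hB k hs hst.le htT).trans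
      (by gcongr; linarith)
  calc _ ≤ ((4 * C + 1) * (t - s) ^ γ) ^ β *
          (‖dyadicInterp T k B t - B t‖ + ‖dyadicInterp T k B s - B s‖) ^ (1 - β) :=
        le_rpow_mul_rpow_of_le_of_le (norm_nonneg _) hholder (norm_sub_le _ _) hβ0.le hβ1.le
    _ = _ := by
        rw [Real.mul_rpow (by positivity) (by positivity), ← Real.rpow_mul hts, mul_comm γ β]
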